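/- arXiv:2101.03280 — 7 statements merged into one kernel-verified Lean document; each statement's English description precedes it below -/
import Mathlib

section
/- Every eigenvalue of the nested-case transfer matrix T, regarded as a matrix over the complex numbers, is a real number. -/
/-!
`T` is a diagonal matrix `diag d`, with `d` constant on each part of the partition
`{r < q_b} ∪ {r ≥ q_b}`, plus a matrix constant on each of the four blocks this partition cuts
out. This shape survives every step of the construction of `T`: scaling rows or columns by vectors
constant on the parts, row normalization, and the correction `(I - ψ 1ᵀ) ·`, which moreover gives
`1ᵀ T = 0` since `1ᵀ ψ = 1`. Let `T v = μ v` with `v ≠ 0`. If `μ` is `0` or a value of `d`, it is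
real. Otherwise `(μ - d_r) v_r` depends only on the part of `r`, so `v` is constant on both parts,
and `μ 1ᵀ v = 1ᵀ T v = 0` forces `1ᵀ v = 0`. Such a `v` is a complex multiple of a real vector,
so `μ = (T v)_r / v_r` is real.
-/

open Matrix BigOperators

/-- The nested-case transfer matrix `T` of CRSBM: coordinates are indexed
by `Fin qs` (the first `qb` coordinates correspond to the brother communities
of node `i`'s own category). -/
noncomputable def nestedT (qs qb : ℕ) (γ ωin ωout : ℝ) :
    Matrix (Fin qs) (Fin qs) ℝ :=
  let Z : ℝ := (qb : ℝ) * γ + ((qs : ℝ) - (qb : ℝ))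
  let ψ : Fin qs → ℝ := fun r => if (r : ℕ) < qb then γ / Z else 1 / Z
  let F : Matrix (Fin qs) (Fin qs) ℝ :=
    Matrix.diagonal (fun r => if (r : ℕ) < qb then (1 : ℝ) else γ)
  let Ω : Matrix (Fin qs) (Fin qs) ℝ :=
    Matrix.of fun r s => if r = s then ωin else ωout
  let M : Matrix (Fin qs) (Fin qs) ℝ := Matrix.diagonal ψ * Ω * F
  let D : Matrix (Fin qs) (Fin qs) ℝ := Matrix.diagonal (fun r => ∑ s, M r s)
  (1 - Matrix.vecMulVec ψ (fun _ => 1)) * (D⁻¹ * M)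

open Finset

namespace Matrix

variable {ι κ : Type*} [DecidableEq ι]

def IsDiagonalAddBlockConst {R : Type*} [Add R] [Zero R] (p : ι → κ) (A : Matrix ι ι R) :
    Prop :=
  ∃ (d : κ → R) (B : Matrix κ κ R), A = diagonal (d ∘ p) + B.submatrix p p

theorem map_diagonal_comp_add_submatrix {R S : Type*} [CommRing R] [CommRing S] (f : R →+* S)
    (p : ι → κ) (d : κ → R) (B : Matrix κ κ R) :
    (diagonal (d ∘ p) + B.submatrix p p).map f =
      diagonal ((f ∘ d) ∘ p) + (B.map f).submatrix p p := by
  rw [Matrix.map_add f (map_add f), diagonal_map (map_zero f), submatrix_map]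
  rfl

namespace IsDiagonalAddBlockConst

section CommRing

variable {R : Type*} [CommRing R] {p : ι → κ} {A : Matrix ι ι R}

theorem sub_vecMulVec (hA : IsDiagonalAddBlockConst p A) (u v : κ → R) :
    IsDiagonalAddBlockConst p (A - vecMulVec (u ∘ p) (v ∘ p)) := by
  obtain ⟨d, B, rfl⟩ := hA
  exact ⟨d, B - vecMulVec u v, by ext r s; simp [vecMulVec_apply, add_sub_assoc]⟩

variable [Fintype ι]

theorem diagonal_mul (hA : IsDiagonalAddBlockConst p A) (g : κ → R) :
    IsDiagonalAddBlockConst p (diagonal (g ∘ p) * A) := by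
  obtain ⟨d, B, rfl⟩ := hA
  refine ⟨g * d, of fun b b' => g b * B b b', ?_⟩
  ext r s
  simp [mul_add, Matrix.diagonal_mul, diagonal_apply]

theorem mul_diagonal (hA : IsDiagonalAddBlockConst p A) (g : κ → R) :
    IsDiagonalAddBlockConst p (A * diagonal (g ∘ p)) := by
  obtain ⟨d, B, rfl⟩ := hA
  refine ⟨d * g, of fun b b' => B b b' * g b', ?_⟩
  ext r s
  by_cases h : r = s <;> simp [add_mul, Matrix.mul_diagonal, h]

theorem exists_rowSum_eq_comp (hA : IsDiagonalAddBlockConst p A) :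
    ∃ σ : κ → R, (fun r => ∑ s, A r s) = σ ∘ p := by
  obtain ⟨d, B, rfl⟩ := hA
  exact ⟨fun b => d b + ∑ s, B b (p s), by
    ext r; simp [Finset.sum_add_distrib, diagonal_apply]⟩

theorem exists_colSum_eq_comp (hA : IsDiagonalAddBlockConst p A) :
    ∃ τ : κ → R, (fun _ => 1) ᵥ* A = τ ∘ p := by
  obtain ⟨d, B, rfl⟩ := hA
  exact ⟨fun b => d b + ∑ r, B (p r) b, by
    ext s; simp [vecMul, dotProduct, Finset.sum_add_distrib, diagonal_apply]⟩

theorem one_sub_vecMulVec_mul (hA : IsDiagonalAddBlockConst p A) (ψ : κ → R) :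
    IsDiagonalAddBlockConst p ((1 - vecMulVec (ψ ∘ p) (fun _ => 1)) * A) := by
  obtain ⟨τ, hτ⟩ := hA.exists_colSum_eq_comp
  rw [Matrix.sub_mul, Matrix.one_mul, vecMulVec_mul, hτ]
  exact hA.sub_vecMulVec ψ τ

end CommRing

end IsDiagonalAddBlockConst

variable [Fintype ι] {K : Type*} [Field K]

theorem exists_inv_diagonal_comp (p : ι → κ) (σ : κ → K) :
    ∃ τ : κ → K, (diagonal (σ ∘ p))⁻¹ = diagonal (τ ∘ p) := by
  by_cases h : ∀ r, σ (p r) ≠ 0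
  · refine ⟨σ⁻¹, inv_eq_left_inv ?_⟩
    rw [diagonal_mul_diagonal, ← diagonal_one]
    exact congrArg diagonal (funext fun r => inv_mul_cancel₀ (h r))
  · -- the inverse of a singular matrix is the junk value `0`, which also has this shape
    push Not at h
    obtain ⟨r, hr⟩ := h
    refine ⟨0, ?_⟩
    rw [nonsing_inv_apply_not_isUnit, Pi.zero_comp, eq_comm, diagonal_eq_zero]
    rw [det_diagonal, Finset.prod_eq_zero (Finset.mem_univ r) hr]
    exact not_isUnit_zero

theorem IsDiagonalAddBlockConst.inv_rowSum_mul {p : ι → κ} {A : Matrix ι ι K}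
    (hA : IsDiagonalAddBlockConst p A) :
    IsDiagonalAddBlockConst p ((diagonal fun r => ∑ s, A r s)⁻¹ * A) := by
  obtain ⟨σ, hσ⟩ := hA.exists_rowSum_eq_comp
  obtain ⟨τ, hτ⟩ := exists_inv_diagonal_comp p σ
  rw [hσ, hτ]
  exact hA.diagonal_mul τ

theorem exists_mulVec_eq_smul_of_mem_spectrum {A : Matrix ι ι K} {μ : K}
    (hμ : μ ∈ spectrum K A) : ∃ v ≠ 0, A *ᵥ v = μ • v := by
  rw [← spectrum_toLin', ← Module.End.hasEigenvalue_iff_mem_spectrum] at hμ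
  obtain ⟨v, hv⟩ := hμ.exists_hasEigenvector
  exact ⟨v, hv.2, by rw [← toLin'_apply, hv.apply_eq_smul]⟩

theorem exists_eq_comp_of_diagonal_comp_add_submatrix_mulVec_eq_smul {p : ι → κ} {d : κ → K}
    {B : Matrix κ κ K} {v : ι → K} {μ : K}
    (hv : (diagonal (d ∘ p) + B.submatrix p p) *ᵥ v = μ • v) (hμ : ∀ r, μ ≠ d (p r)) :
    ∃ a : κ → K, v = a ∘ p := by
  refine ⟨fun b => (∑ s, B b (p s) * v s) / (μ - d b), funext fun r => ?_⟩
  have hr := congrFun hv r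
  simp only [add_mulVec, Pi.add_apply, mulVec_diagonal, Function.comp_apply, Pi.smul_apply,
    smul_eq_mul] at hr
  simp only [mulVec, dotProduct, submatrix_apply] at hr
  show v r = (∑ s, B (p r) (p s) * v s) / (μ - d (p r))
  rw [eq_div_iff (sub_ne_zero.mpr (hμ r))]
  linear_combination -hr

end Matrix

namespace Complex

variable {ι : Type*} [Fintype ι]

theorem im_div_eq_zero_of_sum_comp_eq_zero {p : ι → Bool} {a : Bool → ℂ}
    (hsum : ∑ r, a (p r) = 0) (r₀ r : ι) (h₀ : a (p r₀) ≠ 0) :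
    (a (p r) / a (p r₀)).im = 0 := by
  by_cases hr : p r = p r₀
  · rw [hr, div_self h₀, one_im]
  set n₀ : ℕ := #{s | p s = p r₀}
  set n : ℕ := #{s | p s ≠ p r₀}
  have hn : (n : ℂ) ≠ 0 := by
    have : 0 < n := card_pos.mpr ⟨r, by simp [hr]⟩
    exact_mod_cast this.ne'
  have hsplit : (n₀ : ℂ) * a (p r₀) + n * a (p r) = 0 := by
    rw [← sum_filter_add_sum_filter_not univ (fun s => p s = p r₀)] at hsum
    have hother : ∀ s ∈ ({s | p s ≠ p r₀} : Finset ι), a (p s) = a (p r) := fun s hs => by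
      have hs := (mem_filter.mp hs).2
      revert hs hr; cases p s <;> cases p r <;> cases p r₀ <;> simp
    rwa [sum_congr rfl fun s hs => congrArg a (mem_filter.mp hs).2, sum_congr rfl hother,
      sum_const, sum_const, nsmul_eq_mul, nsmul_eq_mul] at hsum
  have hratio : a (p r) / a (p r₀) = ((-(n₀ : ℝ) / n : ℝ) : ℂ) := by
    rw [div_eq_iff h₀]
    push_cast
    field_simp
    linear_combination hsplit
  rw [hratio, ofReal_im]

theorem im_eq_zero_of_map_ofReal_mulVec_eq_smul {T : Matrix ι ι ℝ} {v : ι → ℂ} {μ : ℂ}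
    (hv : T.map ofReal *ᵥ v = μ • v) (r₀ : ι) (h₀ : v r₀ ≠ 0)
    (hreal : ∀ s, (v s / v r₀).im = 0) : μ.im = 0 := by
  have hμ : μ = ∑ s, (T r₀ s : ℂ) * (v s / v r₀) := by
    have := congrFun hv r₀
    simp only [mulVec, dotProduct, map_apply, Pi.smul_apply, smul_eq_mul] at this
    simp only [mul_div_assoc', ← sum_div, this]
    field_simp
  simp [hμ, im_sum, hreal]

end Complex

theorem Matrix.IsDiagonalAddBlockConst.im_eq_zero_of_mem_spectrum {ι : Type*} [Fintype ι]
    [DecidableEq ι] {p : ι → Bool} {T : Matrix ι ι ℝ} (hT : IsDiagonalAddBlockConst p T)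
    (hcol : ∀ s, ∑ r, T r s = 0) {μ : ℂ} (hμ : μ ∈ spectrum ℂ (T.map Complex.ofReal)) :
    μ.im = 0 := by
  obtain ⟨v, hv0, hv⟩ := exists_mulVec_eq_smul_of_mem_spectrum hμ
  obtain ⟨d, B, rfl⟩ := hT
  by_cases hd : ∃ r, μ = d (p r)
  · obtain ⟨r, rfl⟩ := hd
    exact Complex.ofReal_im _
  push Not at hd
  by_cases hμ0 : μ = 0
  · rw [hμ0, Complex.zero_im]
  have hsum : ∑ r, v r = 0 := by
    have htotal := congrArg (fun w => ∑ r, w r) hv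
    simp only [mulVec, dotProduct, map_apply, Pi.smul_apply, smul_eq_mul, ← mul_sum] at htotal
    rw [sum_comm] at htotal
    simp only [← sum_mul, ← Complex.ofReal_sum, hcol, Complex.ofReal_zero, zero_mul,
      sum_const_zero] at htotal
    exact (mul_eq_zero.mp htotal.symm).resolve_left hμ0
  have hv' : (diagonal (d ∘ p) + B.submatrix p p).map Complex.ofRealHom *ᵥ v = μ • v := hv
  rw [map_diagonal_comp_add_submatrix] at hv'
  obtain ⟨a, rfl⟩ := exists_eq_comp_of_diagonal_comp_add_submatrix_mulVec_eq_smul hv' hd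
  obtain ⟨r₀, h₀⟩ : ∃ r₀, a (p r₀) ≠ 0 := by
    by_contra! h
    exact hv0 (funext h)
  exact Complex.im_eq_zero_of_map_ofReal_mulVec_eq_smul hv r₀ h₀
    fun s => Complex.im_div_eq_zero_of_sum_comp_eq_zero hsum r₀ s h₀

theorem Fin.sum_ite_val_lt {R : Type*} [CommRing R] {m n : ℕ} (h : m ≤ n) (x y : R) :
    ∑ r : Fin n, (if (r : ℕ) < m then x else y) = m * x + ((n - m : ℕ) : R) * y := by
  rw [sum_ite, Finset.sum_const, Finset.sum_const, Fin.card_filter_val_lt, filter_not,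
    card_sdiff_of_subset (filter_subset _ _), Fin.card_filter_val_lt, card_univ, Fintype.card_fin,
    min_eq_right h, nsmul_eq_mul, nsmul_eq_mul]

theorem Matrix.sum_one_sub_vecMulVec_mul_apply {ι R : Type*} [Fintype ι] [DecidableEq ι]
    [CommRing R] {ψ : ι → R} (hψ : ∑ r, ψ r = 1) (A : Matrix ι ι R) (s : ι) :
    ∑ r, ((1 - vecMulVec ψ (fun _ => 1) : Matrix ι ι R) * A) r s = 0 := by
  have hleft : (fun _ => 1) ᵥ* (1 - vecMulVec ψ (fun _ : ι => (1 : R))) = 0 := by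
    rw [vecMul_sub, vecMul_one, vecMul_vecMulVec, ← Pi.one_def, one_dotProduct, hψ, one_smul,
      sub_self]
  have hcol : (fun _ => 1) ᵥ* ((1 - vecMulVec ψ (fun _ : ι => (1 : R))) * A) = 0 := by
    rw [← vecMul_vecMul, hleft, zero_vecMul]
  simpa [vecMul, dotProduct] using congrFun hcol s

theorem isDiagonalAddBlockConst_nestedT (qs qb : ℕ) (γ ωin ωout : ℝ) :
    IsDiagonalAddBlockConst (fun r : Fin qs => decide ((r : ℕ) < qb))
      (nestedT qs qb γ ωin ωout) := by
  set p := fun r : Fin qs => decide ((r : ℕ) < qb)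
  have hcomp (x y : ℝ) :
      (fun r : Fin qs => if (r : ℕ) < qb then x else y) = (fun b => if b then x else y) ∘ p := by
    funext r; simp [p]
  have hΩ : IsDiagonalAddBlockConst p (of fun r s : Fin qs => if r = s then ωin else ωout) :=
    ⟨fun _ => ωin - ωout, of fun _ _ => ωout, by
      ext r s; by_cases h : r = s <;> simp [h]⟩
  unfold nestedT
  dsimp only
  rw [hcomp, hcomp]
  exact ((hΩ.diagonal_mul _).mul_diagonal _).inv_rowSum_mul.one_sub_vecMulVec_mul _

theorem sum_nestedT_apply {qs qb : ℕ} (hqb : 2 ≤ qb) (hqs : 2 * qb ≤ qs) {γ : ℝ} (hγ : 1 < γ)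
    (ωin ωout : ℝ) (s : Fin qs) : ∑ r, nestedT qs qb γ ωin ωout r s = 0 := by
  have hle : qb ≤ qs := by omega
  have hZ : 0 < (qb : ℝ) * γ + ((qs : ℝ) - (qb : ℝ)) := by
    have hqb' : (0 : ℝ) < qb := by exact_mod_cast (by omega : 0 < qb)
    have hle' : (qb : ℝ) ≤ qs := by exact_mod_cast hle
    nlinarith
  refine sum_one_sub_vecMulVec_mul_apply ?_ _ s
  rw [Fin.sum_ite_val_lt hle, Nat.cast_sub hle]
  field_simp [hZ.ne']

theorem nestedT_eigenvalues_real_general (qs qb : ℕ) (hqb : 2 ≤ qb) (hqs : 2 * qb ≤ qs)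
    (γ ωin ωout : ℝ) (hγ : 1 < γ) :
    ∀ μ ∈ spectrum ℂ ((nestedT qs qb γ ωin ωout).map Complex.ofReal), μ.im = 0 :=
  fun _ hμ => (isDiagonalAddBlockConst_nestedT qs qb γ ωin ωout).im_eq_zero_of_mem_spectrum
    (sum_nestedT_apply hqb hqs hγ ωin ωout) hμ

/-- Every eigenvalue of the nested-case transfer matrix `T`, regarded as a
matrix over `ℂ`, is a real number. -/
theorem nestedT_eigenvalues_real (qs qb : ℕ) (hqb : 2 ≤ qb) (hqs : 2 * qb ≤ qs)
    (γ ωin ωout : ℝ) (hγ : 1 < γ) (hω : ωout < ωin) (hω0 : 0 < ωout) :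
    ∀ μ ∈ spectrum ℂ ((nestedT qs qb γ ωin ωout).map Complex.ofReal), μ.im = 0 :=
  nestedT_eigenvalues_real_general qs qb hqb hqs γ ωin ωout hγ
end

section
/- For any indices r ≠ s with q_b < r ≤ q⋆ and q_b < s ≤ q⋆, the vector e_r − e_s (difference of standard basis vectors) is an eigenvector of the nested-case transfer matrix T with eigenvalue λ_b = (ω_in − ω_out)/(ω_in + (q⋆ − 1 − q_b)·ω_out + q_b·γ⁻¹·ω_out); in particular λ_b is an eigenvalue of T. -/
/-!
For `r ≠ s` outside the first `qb` coordinates, `v = e_r - e_s` has coordinate sum zero and is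
supported where `ψ`, `F` and the row sums of `M` are constant. Hence `F`, `diag ψ` and `D⁻¹` act
on `v` as scalars, `Ω = ω_out·J + (ω_in - ω_out)·I` acts as `ω_in - ω_out` since `J v = 0`, and
`I - ψ·1ᵀ` fixes `v`. The eigenvalue is `γ (ω_in - ω_out) / Z` divided by the common row sum.
-/

open Matrix BigOperators

open Finset

theorem Pi.eq_or_eq_of_single_sub_single_ne_zero {n K : Type*} [DecidableEq n] [Ring K] {r s i : n}
    (h : (Pi.single r (1 : K) - Pi.single s 1 : n → K) i ≠ 0) : i = r ∨ i = s := by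
  by_contra! hne
  simp [hne.1, hne.2] at h

namespace Matrix

variable {n K : Type*} [Fintype n] [DecidableEq n]

theorem diagonal_mulVec_eq_smul [Semiring K] {d v : n → K} {c : K}
    (h : ∀ i, v i ≠ 0 → d i = c) : diagonal d *ᵥ v = c • v := by
  ext i
  rw [mulVec_diagonal, Pi.smul_apply, smul_eq_mul]
  by_cases hv : v i = 0
  · simp [hv]
  · rw [h i hv]

theorem of_ite_eq_mulVec_of_sum_eq_zero [Ring K] (a b : K) {v : n → K} (hv : ∑ i, v i = 0) :
    of (fun i j => if i = j then a else b) *ᵥ v = (a - b) • v := by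
  ext i
  have hsplit : ∀ j, (if i = j then a else b) * v j =
      b * v j + if i = j then (a - b) * v j else 0 := by
    intro j
    split_ifs
    · rw [sub_mul, add_sub_cancel]
    · rw [add_zero]
  simp only [mulVec, dotProduct, of_apply, hsplit, sum_add_distrib, ← mul_sum, hv, mul_zero,
    sum_ite_eq, mem_univ, if_true, zero_add, Pi.smul_apply, smul_eq_mul]

theorem one_sub_vecMulVec_mulVec_of_sum_eq_zero [Ring K] (ψ : n → K) {v : n → K}
    (hv : ∑ i, v i = 0) : (1 - vecMulVec ψ (fun _ => 1)) *ᵥ v = v := by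
  rw [sub_mulVec, one_mulVec, vecMulVec_mulVec]
  change v - MulOpposite.op (1 ⬝ᵥ v) • ψ = v
  rw [one_dotProduct, hv, MulOpposite.op_zero, zero_smul, sub_zero]

theorem inv_diagonal_of_ne_zero [Field K] {d : n → K} (h : ∀ i, d i ≠ 0) :
    (diagonal d)⁻¹ = diagonal d⁻¹ := by
  refine inv_eq_right_inv ?_
  rw [diagonal_mul_diagonal, ← diagonal_one]
  exact congrArg diagonal (funext fun i => mul_inv_cancel₀ (h i))

noncomputable def rowNormalize [Field K] (M : Matrix n n K) : Matrix n n K :=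
  (diagonal fun i => ∑ j, M i j)⁻¹ * M

theorem rowNormalize_mulVec_eq_smul [Field K] {M : Matrix n n K} {v : n → K} {μ ρ : K}
    (hrow : ∀ i, ∑ j, M i j ≠ 0) (hρ : ∀ i, v i ≠ 0 → ∑ j, M i j = ρ) (hMv : M *ᵥ v = μ • v) :
    rowNormalize M *ᵥ v = (μ / ρ) • v := by
  rw [rowNormalize, ← mulVec_mulVec, hMv, mulVec_smul, inv_diagonal_of_ne_zero hrow,
    diagonal_mulVec_eq_smul (c := ρ⁻¹) (fun i hi => by rw [Pi.inv_apply, hρ i hi]),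
    smul_smul, div_eq_mul_inv]

end Matrix

section Nested

variable (qs qb : ℕ) (γ ωin ωout : ℝ)

noncomputable def nestedZ : ℝ := (qb : ℝ) * γ + ((qs : ℝ) - (qb : ℝ))

noncomputable def nestedψ : Fin qs → ℝ :=
  fun r => if (r : ℕ) < qb then γ / nestedZ qs qb γ else 1 / nestedZ qs qb γ

def nestedF : Fin qs → ℝ := fun r => if (r : ℕ) < qb then 1 else γ

def nestedΩ : Matrix (Fin qs) (Fin qs) ℝ := of fun r s => if r = s then ωin else ωout

noncomputable def nestedM : Matrix (Fin qs) (Fin qs) ℝ :=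
  diagonal (nestedψ qs qb γ) * nestedΩ qs ωin ωout * diagonal (nestedF qs qb γ)

theorem nestedT_eq : nestedT qs qb γ ωin ωout =
    (1 - vecMulVec (nestedψ qs qb γ) (fun _ => 1)) * rowNormalize (nestedM qs qb γ ωin ωout) :=
  rfl

variable {qs qb γ ωin ωout}

theorem nestedM_apply (t u : Fin qs) :
    nestedM qs qb γ ωin ωout t u =
      nestedψ qs qb γ t * (if t = u then ωin else ωout) * nestedF qs qb γ u := by
  rw [nestedM, mul_diagonal, diagonal_mul]
  rfl

theorem nestedZ_pos (hγ : 0 ≤ γ) (hqs : qb < qs) : 0 < nestedZ qs qb γ := by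
  have : (qb : ℝ) < qs := by exact_mod_cast hqs
  have : 0 ≤ (qb : ℝ) * γ := by positivity
  unfold nestedZ
  linarith

theorem sum_nestedF (hqs : qb ≤ qs) :
    ∑ u, nestedF qs qb γ u = qb + ((qs : ℝ) - qb) * γ := by
  have hlt : #{i : Fin qs | (i : ℕ) < qb} = qb := by
    rw [Fin.card_filter_val_lt, min_eq_right hqs]
  have hge : #{i : Fin qs | ¬(i : ℕ) < qb} = qs - qb := by
    have := card_filter_add_card_filter_not (s := univ) fun i : Fin qs => (i : ℕ) < qb
    rw [card_univ, Fintype.card_fin] at this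
    omega
  simp only [nestedF, sum_ite, sum_const, hlt, hge, nsmul_eq_mul, Nat.cast_sub hqs, mul_one]

theorem nestedM_pos (hγ : 0 < γ) (hωin : 0 < ωin) (hωout : 0 < ωout) (hqs : qb < qs)
    (t u : Fin qs) : 0 < nestedM qs qb γ ωin ωout t u := by
  have hZ := nestedZ_pos hγ.le hqs
  have hψ : 0 < nestedψ qs qb γ t := by
    unfold nestedψ
    split_ifs <;> exact div_pos (by linarith) hZ
  have hΩ : 0 < if t = u then ωin else ωout := by split_ifs <;> assumption
  have hF : 0 < nestedF qs qb γ u := by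
    unfold nestedF
    split_ifs <;> linarith
  rw [nestedM_apply]
  exact mul_pos (mul_pos hψ hΩ) hF

theorem nestedM_rowSum_pos (hγ : 0 < γ) (hωin : 0 < ωin) (hωout : 0 < ωout) (hqs : qb < qs)
    (t : Fin qs) : 0 < ∑ u, nestedM qs qb γ ωin ωout t u :=
  sum_pos (fun u _ => nestedM_pos hγ hωin hωout hqs t u) ⟨t, mem_univ t⟩

theorem nestedM_rowSum_of_le (hqs : qb ≤ qs) {t : Fin qs} (ht : qb ≤ (t : ℕ)) :
    ∑ u, nestedM qs qb γ ωin ωout t u =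
      (ωout * (qb + ((qs : ℝ) - qb) * γ) + (ωin - ωout) * γ) / nestedZ qs qb γ := by
  have hψ : nestedψ qs qb γ t = 1 / nestedZ qs qb γ := if_neg (not_lt.2 ht)
  have hFt : nestedF qs qb γ t = γ := if_neg (not_lt.2 ht)
  have hsplit : ∀ u, (if t = u then ωin else ωout) * nestedF qs qb γ u =
      ωout * nestedF qs qb γ u + if t = u then (ωin - ωout) * nestedF qs qb γ t else 0 := by
    intro u
    split_ifs with h
    · rw [h]; ring
    · rw [add_zero]
  simp only [nestedM_apply, mul_assoc, ← mul_sum, hsplit, sum_add_distrib, sum_nestedF hqs,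
    sum_ite_eq, mem_univ, if_true, hψ, hFt]
  ring

theorem nestedM_mulVec {v : Fin qs → ℝ} (hv : ∑ i, v i = 0)
    (hsupp : ∀ i, v i ≠ 0 → qb ≤ (i : ℕ)) :
    nestedM qs qb γ ωin ωout *ᵥ v = (γ * (ωin - ωout) / nestedZ qs qb γ) • v := by
  have hF : diagonal (nestedF qs qb γ) *ᵥ v = γ • v :=
    diagonal_mulVec_eq_smul fun i hi => if_neg (not_lt.2 (hsupp i hi))
  have hψ : diagonal (nestedψ qs qb γ) *ᵥ v = (1 / nestedZ qs qb γ) • v :=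
    diagonal_mulVec_eq_smul fun i hi => if_neg (not_lt.2 (hsupp i hi))
  rw [nestedM, ← mulVec_mulVec, ← mulVec_mulVec, hF, mulVec_smul, nestedΩ,
    of_ite_eq_mulVec_of_sum_eq_zero _ _ hv, mulVec_smul, mulVec_smul, hψ, smul_smul, smul_smul]
  congr 1
  ring

theorem nestedM_mulVec_div_rowSum (hγ : γ ≠ 0) (hZ : nestedZ qs qb γ ≠ 0) :
    γ * (ωin - ωout) / nestedZ qs qb γ /
      ((ωout * (qb + ((qs : ℝ) - qb) * γ) + (ωin - ωout) * γ) / nestedZ qs qb γ) =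
      (ωin - ωout) / (ωin + ((qs : ℝ) - 1 - (qb : ℝ)) * ωout + (qb : ℝ) * γ⁻¹ * ωout) := by
  rw [div_div_div_cancel_right₀ hZ, ← mul_div_mul_left (ωin - ωout) _ hγ]
  congr 1
  field_simp
  ring

end Nested

theorem nestedT_eigenvector_outside_general (qs qb : ℕ)
    (γ ωin ωout : ℝ) (hγ : 1 < γ) (hω : ωout < ωin) (hω0 : 0 < ωout)
    (r s : Fin qs) (hr : qb ≤ (r : ℕ)) (hs : qb ≤ (s : ℕ)) (hrs : r ≠ s) :
    nestedT qs qb γ ωin ωout *ᵥ (Pi.single r 1 - Pi.single s 1) =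
      ((ωin - ωout) / (ωin + ((qs : ℝ) - 1 - (qb : ℝ)) * ωout + (qb : ℝ) * γ⁻¹ * ωout)) •
        (Pi.single r 1 - Pi.single s 1) ∧
    Module.End.HasEigenvalue (Matrix.toLin' (nestedT qs qb γ ωin ωout))
      ((ωin - ωout) / (ωin + ((qs : ℝ) - 1 - (qb : ℝ)) * ωout + (qb : ℝ) * γ⁻¹ * ωout)) := by
  have hγ0 : 0 < γ := one_pos.trans hγ
  have hqs : qb < qs := hr.trans_lt r.isLt
  set v : Fin qs → ℝ := Pi.single r 1 - Pi.single s 1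
  have hv : ∑ i, v i = 0 := by simp [v]
  have hsupp : ∀ i, v i ≠ 0 → qb ≤ (i : ℕ) := fun i hi =>
    (Pi.eq_or_eq_of_single_sub_single_ne_zero hi).elim (· ▸ hr) (· ▸ hs)
  have hTv := calc
    nestedT qs qb γ ωin ωout *ᵥ v
      = (1 - vecMulVec (nestedψ qs qb γ) (fun _ => 1)) *ᵥ
          (rowNormalize (nestedM qs qb γ ωin ωout) *ᵥ v) := by rw [nestedT_eq, mulVec_mulVec]
    _ = _ := by
      rw [rowNormalize_mulVec_eq_smul
          (fun i => (nestedM_rowSum_pos hγ0 (hω0.trans hω) hω0 hqs i).ne')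
          (fun i hi => nestedM_rowSum_of_le hqs.le (hsupp i hi)) (nestedM_mulVec hv hsupp),
        mulVec_smul, one_sub_vecMulVec_mulVec_of_sum_eq_zero _ hv,
        nestedM_mulVec_div_rowSum hγ0.ne' (nestedZ_pos hγ0.le hqs).ne']
  have hv0 : v ≠ 0 := fun h => by simpa [v, hrs] using congrFun h r
  exact ⟨hTv, Module.End.hasEigenvalue_of_hasEigenvector
    ⟨Module.End.mem_eigenspace_iff.2 (by rw [toLin'_apply]; exact hTv), hv0⟩⟩

/-- For indices `r ≠ s` both beyond the first `qb` coordinates (i.e. outside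
node `i`'s own category), `e_r - e_s` is an eigenvector of the nested-case
transfer matrix `T` with eigenvalue
`λ_b = (ωin - ωout)/(ωin + (qs - 1 - qb)·ωout + qb·γ⁻¹·ωout)`;
in particular `λ_b` is an eigenvalue of `T`. -/
theorem nestedT_eigenvector_outside (qs qb : ℕ) (hqb : 2 ≤ qb) (hqs : 2 * qb ≤ qs)
    (γ ωin ωout : ℝ) (hγ : 1 < γ) (hω : ωout < ωin) (hω0 : 0 < ωout)
    (r s : Fin qs) (hr : qb ≤ (r : ℕ)) (hs : qb ≤ (s : ℕ)) (hrs : r ≠ s) :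
    nestedT qs qb γ ωin ωout *ᵥ (Pi.single r 1 - Pi.single s 1) =
      ((ωin - ωout) / (ωin + ((qs : ℝ) - 1 - (qb : ℝ)) * ωout + (qb : ℝ) * γ⁻¹ * ωout)) •
        (Pi.single r 1 - Pi.single s 1) ∧
    Module.End.HasEigenvalue (Matrix.toLin' (nestedT qs qb γ ωin ωout))
      ((ωin - ωout) / (ωin + ((qs : ℝ) - 1 - (qb : ℝ)) * ωout + (qb : ℝ) * γ⁻¹ * ωout)) :=
  nestedT_eigenvector_outside_general qs qb γ ωin ωout hγ hω hω0 r s hr hs hrs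
end

section
/- For any integers q⋆ > q_b ≥ 1, any real c̃ > 1, and any real γ > 1, the detectability threshold with attributes strictly exceeds the attribute-free threshold: ε⋆(γ, q_b) > ε⋆(1, q_b), where ε⋆(1, q_b) = (√c̃ − 1)/(q⋆ + √c̃ − 1). -/
/-- The detectability threshold `ε⋆(γ, q_b)` for `q⋆` communities, excess degree
`c̃`, attribute-dependence level `γ` and brother-community number `q_b`:
`ε⋆ = (√c̃ - 1)/(η·(q⋆ - q_b + q_b·γ⁻¹ + √c̃ - 1))` with
`η = (q_b - 1 + γ⁻²·(q⋆ - q_b))/(q⋆ - 1)`. -/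
noncomputable def epsStar (qs : ℕ) (ct γ qb : ℝ) : ℝ :=
  (Real.sqrt ct - 1) /
    (((qb - 1 + (γ ^ 2)⁻¹ * ((qs : ℝ) - qb)) / ((qs : ℝ) - 1)) *
      ((qs : ℝ) - qb + qb * γ⁻¹ + Real.sqrt ct - 1))

/-- For integers `q⋆ > q_b ≥ 1`, real `c̃ > 1` and real `γ > 1`, the
detectability threshold with attributes strictly exceeds the attribute-free one:
`ε⋆(γ, q_b) > ε⋆(1, q_b)`, where `ε⋆(1, q_b) = (√c̃ - 1)/(q⋆ + √c̃ - 1)`. -/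
theorem epsStar_gt_attribute_free (qs qb : ℕ) (hqb : 1 ≤ qb) (hqs : qb < qs)
    (ct γ : ℝ) (hct : 1 < ct) (hγ : 1 < γ) :
    epsStar qs ct γ qb > epsStar qs ct 1 qb ∧
      epsStar qs ct 1 qb = (Real.sqrt ct - 1) / ((qs : ℝ) + Real.sqrt ct - 1) := by
  have hs : 1 < Real.sqrt ct := by
    rw [show (1 : ℝ) = Real.sqrt 1 by simp]
    exact Real.sqrt_lt_sqrt (by norm_num) hct
  set s := Real.sqrt ct with hsdef
  have hB1 : (1 : ℝ) ≤ (qb : ℝ) := by exact_mod_cast hqb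
  have hAB : (qb : ℝ) + 1 ≤ (qs : ℝ) := by exact_mod_cast hqs
  have hA1 : (1 : ℝ) < (qs : ℝ) := by linarith
  have hγ0 : (0 : ℝ) < γ := by linarith
  -- the γ = 1 value simplifies
  have h1 : epsStar qs ct 1 qb = (s - 1) / ((qs : ℝ) + s - 1) := by
    unfold epsStar
    rw [← hsdef]
    have : (((qb : ℝ) - 1 + ((1 : ℝ) ^ 2)⁻¹ * ((qs : ℝ) - qb)) / ((qs : ℝ) - 1)) = 1 := by
      rw [div_eq_one_iff_eq (by linarith)]; ring
    rw [this]
    norm_num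
  refine ⟨?_, h1⟩
  rw [h1]
  unfold epsStar
  rw [← hsdef]
  have hη1 : ((qb : ℝ) - 1 + (γ ^ 2)⁻¹ * ((qs : ℝ) - qb)) / ((qs : ℝ) - 1) < 1 := by
    rw [div_lt_one (by linarith)]
    have hγ2 : (1 : ℝ) < γ ^ 2 := by nlinarith
    have : (γ ^ 2)⁻¹ < 1 := by
      rw [inv_lt_one_iff₀]; right; exact hγ2
    nlinarith
  have hη0 : 0 < ((qb : ℝ) - 1 + (γ ^ 2)⁻¹ * ((qs : ℝ) - qb)) / ((qs : ℝ) - 1) := by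
    apply div_pos _ (by linarith)
    have : 0 < (γ ^ 2)⁻¹ := by positivity
    nlinarith
  have hγinv : γ⁻¹ < 1 := by rw [inv_lt_one_iff₀]; right; exact hγ
  have hγinv0 : 0 < γ⁻¹ := by positivity
  have hF0 : 0 < (qs : ℝ) - qb + qb * γ⁻¹ + s - 1 := by nlinarith
  have hFlt : (qs : ℝ) - qb + qb * γ⁻¹ + s - 1 < (qs : ℝ) + s - 1 := by nlinarith
  have hDγ : 0 < (((qb : ℝ) - 1 + (γ ^ 2)⁻¹ * ((qs : ℝ) - qb)) / ((qs : ℝ) - 1)) *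
      ((qs : ℝ) - qb + qb * γ⁻¹ + s - 1) := mul_pos hη0 hF0
  have hDlt : (((qb : ℝ) - 1 + (γ ^ 2)⁻¹ * ((qs : ℝ) - qb)) / ((qs : ℝ) - 1)) *
      ((qs : ℝ) - qb + qb * γ⁻¹ + s - 1) < (qs : ℝ) + s - 1 := by
    calc _ < 1 * ((qs : ℝ) - qb + qb * γ⁻¹ + s - 1) :=
          mul_lt_mul_of_pos_right hη1 hF0
      _ = (qs : ℝ) - qb + qb * γ⁻¹ + s - 1 := one_mul _
      _ < (qs : ℝ) + s - 1 := hFlt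
  exact div_lt_div_of_pos_left (by linarith) hDγ hDlt
end

section
/- For a fixed integer q⋆ ≥ 4 and fixed reals γ > 1 and c̃ > 1, the detectability threshold is strictly decreasing in the brother-community number: for all reals q_b, q_b′ with 2 ≤ q_b < q_b′ ≤ q⋆/2 one has ε⋆(γ, q_b′) < ε⋆(γ, q_b). -/
set_option maxHeartbeats 1000000


/-- For a fixed integer `q⋆ ≥ 4` and fixed reals `γ > 1`, `c̃ > 1`, the
detectability threshold is strictly decreasing in the (real-valued)
brother-community number `q_b` on `[2, q⋆/2]`. -/
theorem epsStar_strictAnti_qb (qs : ℕ) (hqs : 4 ≤ qs) (γ ct : ℝ)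
    (hγ : 1 < γ) (hct : 1 < ct) :
    ∀ qb qb' : ℝ, 2 ≤ qb → qb < qb' → qb' ≤ (qs : ℝ) / 2 →
      epsStar qs ct γ qb' < epsStar qs ct γ qb := by
  intro qb qb' h2 hlt hhalf
  have hqs4 : (4:ℝ) ≤ (qs:ℝ) := by exact_mod_cast hqs
  set s := Real.sqrt ct with hs
  have hs1 : 1 < s := by
    rw [hs, show (1:ℝ) = Real.sqrt 1 by simp]
    exact Real.sqrt_lt_sqrt (by norm_num) hct
  have hγ0 : 0 < γ := lt_trans one_pos hγ
  have hgi1 : γ⁻¹ < 1 := by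
    rw [inv_lt_one_iff₀]; right; exact hγ
  have hgi0 : 0 < γ⁻¹ := inv_pos.mpr hγ0
  have hβ : (γ^2)⁻¹ = γ⁻¹ * γ⁻¹ := by rw [sq, mul_inv]
  set gi := γ⁻¹ with hgidef
  have hqs1 : (0:ℝ) < (qs:ℝ) - 1 := by linarith
  have hq'half : qb' ≤ (qs:ℝ)/2 := hhalf
  have hqbub : qb ≤ (qs:ℝ)/2 := le_of_lt (lt_of_lt_of_le hlt hhalf)
  -- denominators
  have hN : 0 < qb - 1 + (γ^2)⁻¹ * ((qs:ℝ) - qb) := by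
    rw [hβ]; nlinarith
  have hN' : 0 < qb' - 1 + (γ^2)⁻¹ * ((qs:ℝ) - qb') := by
    rw [hβ]; nlinarith
  have hA : 0 < (qs:ℝ) - qb + qb * gi + s - 1 := by nlinarith
  have hA' : 0 < (qs:ℝ) - qb' + qb' * gi + s - 1 := by nlinarith
  have hD : 0 < ((qb - 1 + (γ^2)⁻¹ * ((qs:ℝ) - qb)) / ((qs:ℝ) - 1)) *
      ((qs:ℝ) - qb + qb * gi + s - 1) :=
    mul_pos (div_pos hN hqs1) hA
  have hD' : 0 < ((qb' - 1 + (γ^2)⁻¹ * ((qs:ℝ) - qb')) / ((qs:ℝ) - 1)) *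
      ((qs:ℝ) - qb' + qb' * gi + s - 1) :=
    mul_pos (div_pos hN' hqs1) hA'
  have hqsum : qb + qb' < (qs:ℝ) := by linarith
  have hb : (0:ℝ) < 1 - gi := by linarith
  have ha : (0:ℝ) < 1 - gi*gi := by nlinarith
  have hT : (0:ℝ) < (1-gi*gi)*((qs:ℝ)-1+s) - (1-gi)*(gi*gi*(qs:ℝ) - 1)
      - (1-gi*gi)*(1-gi)*(qb+qb') := by
    have h1 : (1-gi*gi)*((qs:ℝ)-1+s) - (1-gi)*(gi*gi*(qs:ℝ) - 1)
        - (1-gi*gi)*(1-gi)*(qs:ℝ)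
        = (qs:ℝ)*(gi - gi*gi) + (1 - gi*gi)*(s-1) + (1 - gi) := by ring
    have h2 : (0:ℝ) < (qs:ℝ)*(gi - gi*gi) + (1 - gi*gi)*(s-1) + (1 - gi) := by
      nlinarith [mul_pos (show (0:ℝ) < (qs:ℝ) by linarith) (mul_pos hgi0 hb),
        mul_pos ha (show (0:ℝ) < s - 1 by linarith)]
    nlinarith [mul_pos (mul_pos ha hb) (show (0:ℝ) < (qs:ℝ) - (qb+qb') by linarith)]
  have hFF : (qb - 1 + gi*gi*((qs:ℝ) - qb)) * ((qs:ℝ) - qb + qb * gi + s - 1)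
      < (qb' - 1 + gi*gi*((qs:ℝ) - qb')) * ((qs:ℝ) - qb' + qb' * gi + s - 1) := by
    have hid : (qb' - 1 + gi*gi*((qs:ℝ) - qb')) * ((qs:ℝ) - qb' + qb' * gi + s - 1)
        - (qb - 1 + gi*gi*((qs:ℝ) - qb)) * ((qs:ℝ) - qb + qb * gi + s - 1)
        = (qb' - qb) * ((1-gi*gi)*((qs:ℝ)-1+s) - (1-gi)*(gi*gi*(qs:ℝ) - 1)
            - (1-gi*gi)*(1-gi)*(qb+qb')) := by ring
    linarith [mul_pos (sub_pos.mpr hlt) hT]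
  have key : ((qb - 1 + (γ^2)⁻¹ * ((qs:ℝ) - qb)) / ((qs:ℝ) - 1)) *
      ((qs:ℝ) - qb + qb * gi + s - 1) <
      ((qb' - 1 + (γ^2)⁻¹ * ((qs:ℝ) - qb')) / ((qs:ℝ) - 1)) *
      ((qs:ℝ) - qb' + qb' * gi + s - 1) := by
    rw [div_mul_eq_mul_div, div_mul_eq_mul_div, div_lt_div_iff_of_pos_right hqs1, hβ]
    exact hFF
  unfold epsStar
  rw [← hs]
  exact div_lt_div_of_pos_left (by linarith) hD key
end

section
/- Let q⋆ ≥ 4 be an integer and c̃ > 1 a real. Then there exists a real γ > 1 solving the critical equation ε⋆(γ, 2) = 1 (i.e., (q⋆ − 1)(√c̃ − 1) = (q⋆ − 3 + 2γ⁻¹ + √c̃)·(1 + γ⁻²(q⋆ − 2))) if and only if c̃ > 4. -/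
/-- For an integer `q⋆ ≥ 4` and a real `c̃ > 1`, there exists a real `γ > 1`
solving the critical equation `ε⋆(γ, 2) = 1` if and only if `c̃ > 4`. -/
theorem epsStar_critical_solution_iff (qs : ℕ) (hqs : 4 ≤ qs) (ct : ℝ) (hct : 1 < ct) :
    (∃ γ : ℝ, 1 < γ ∧ epsStar qs ct γ 2 = 1) ↔ 4 < ct := by
  have hct0 : (0:ℝ) ≤ ct := by linarith
  set s := Real.sqrt ct with hs
  have hs1 : 1 < s := by
    rw [hs, show (1:ℝ) = Real.sqrt 1 by simp]
    exact Real.sqrt_lt_sqrt (by norm_num) hct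
  have hsq : s ^ 2 = ct := Real.sq_sqrt hct0
  have hQ : (4:ℝ) ≤ (qs:ℝ) := by exact_mod_cast hqs
  set Q : ℝ := (qs:ℝ) with hQdef
  have hQ1 : (0:ℝ) < Q - 1 := by linarith
  constructor
  · rintro ⟨γ, hγ, heq⟩
    have hγ0 : 0 < γ := by linarith
    have hx0 : 0 < γ⁻¹ := by positivity
    have hx1 : γ⁻¹ < 1 := by
      rw [inv_lt_one_iff₀]; right; exact hγ
    unfold epsStar at heq
    set x : ℝ := γ⁻¹ with hxdef
    have hx2 : (γ ^ 2)⁻¹ = x ^ 2 := by rw [hxdef, inv_pow]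
    rw [hx2] at heq
    set D : ℝ := ((2 - 1 + x ^ 2 * (Q - 2)) / (Q - 1)) * (Q - 2 + 2 * x + s - 1) with hD
    have hDne : D ≠ 0 := by
      intro h
      rw [h, div_zero] at heq
      norm_num at heq
    have hkey : s - 1 = D := (div_eq_one_iff_eq hDne).mp heq
    rw [hD] at hkey
    have hmain : (Q - 1) * (s - 1) = (1 + x ^ 2 * (Q - 2)) * (Q - 3 + 2 * x + s) := by
      field_simp at hkey
      nlinarith [hkey]
    have hs2 : 2 < s := by
      nlinarith [mul_pos (mul_pos hx0 hx0) (show (0:ℝ) < Q - 3 + 2*x + s by nlinarith), hx0]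
    nlinarith [hsq]
  · intro hct4
    have hs2 : 2 < s := by
      rw [hs, show (2:ℝ) = Real.sqrt 4 by rw [show (4:ℝ) = 2^2 by norm_num, Real.sqrt_sq]; norm_num]
      exact Real.sqrt_lt_sqrt (by norm_num) hct4
    set F : ℝ → ℝ := fun x => (1 + x ^ 2 * (Q - 2)) * (Q - 3 + 2 * x + s) - (Q - 1) * (s - 1)
      with hF
    have hcont : ContinuousOn F (Set.Icc 0 1) := by
      apply Continuous.continuousOn; fun_prop
    have hF0 : F 0 < 0 := by simp only [hF]; nlinarith
    have hF1 : 0 < F 1 := by simp only [hF]; nlinarith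
    have hmem : (0:ℝ) ∈ Set.Ioo (F 0) (F 1) := ⟨hF0, hF1⟩
    obtain ⟨x, hxI, hFx⟩ := intermediate_value_Ioo (by norm_num : (0:ℝ) ≤ 1) hcont hmem
    obtain ⟨hx0, hx1⟩ := hxI
    refine ⟨x⁻¹, ?_, ?_⟩
    · exact (one_lt_inv₀ hx0).mpr hx1
    · unfold epsStar
      have h1 : (x⁻¹)⁻¹ = x := inv_inv x
      have h2 : ((x⁻¹) ^ 2)⁻¹ = x ^ 2 := by rw [inv_pow, inv_inv]
      rw [h1, h2]
      have hEq : (1 + x ^ 2 * (Q - 2)) * (Q - 3 + 2 * x + s) = (Q - 1) * (s - 1) := by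
        have := hFx; simp only [hF] at this; linarith
      have hDval : ((2 - 1 + x ^ 2 * (Q - 2)) / (Q - 1)) * (Q - 2 + 2 * x + s - 1) = s - 1 := by
        rw [div_mul_eq_mul_div, div_eq_iff (ne_of_gt hQ1)]
        linear_combination hEq
      rw [← hQdef, hDval, div_self (by linarith : s - 1 ≠ 0)]
end

section
/- For any indices r ≠ s with 2 ≤ r ≤ q and 2 ≤ s ≤ q, the vector e_r − e_s (difference of standard basis vectors) is an eigenvector of the indicative-case transfer matrix T with eigenvalue (ω_in − ω_out)/(ω_in + (q − 2)·ω_out + γ⁻¹·ω_out); in particular this value is an eigenvalue of T. -/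
open Matrix BigOperators

/-- The indicative-case transfer matrix `T` of CRSBM: coordinates are indexed
by `Fin q`, with `Z = γ + q - 1`, `ψ_0 = γ/Z`, `ψ_r = 1/Z` for `r ≥ 1`,
`F = diag(1, γ, …, γ)`, `Ω_{rr} = ωin`, `Ω_{rs} = ωout` for `r ≠ s`,
`M = diag(ψ)·Ω·F`, `D = diag(row sums of M)`, and
`T = (I - ψ·1ᵀ)·(D⁻¹·M)`. -/
noncomputable def indT (q : ℕ) (γ ωin ωout : ℝ) : Matrix (Fin q) (Fin q) ℝ :=
  let Z : ℝ := γ + (q : ℝ) - 1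
  let ψ : Fin q → ℝ := fun r => if (r : ℕ) = 0 then γ / Z else 1 / Z
  let F : Matrix (Fin q) (Fin q) ℝ :=
    Matrix.diagonal (fun r => if (r : ℕ) = 0 then (1 : ℝ) else γ)
  let Ω : Matrix (Fin q) (Fin q) ℝ :=
    Matrix.of fun r s => if r = s then ωin else ωout
  let M : Matrix (Fin q) (Fin q) ℝ := Matrix.diagonal ψ * Ω * F
  let D : Matrix (Fin q) (Fin q) ℝ := Matrix.diagonal (fun r => ∑ s, M r s)
  (1 - Matrix.vecMulVec ψ (fun _ => 1)) * (D⁻¹ * M)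

/-- For indices `r ≠ s` with `r, s ≥ 1` (i.e. away from the first coordinate),
`e_r - e_s` is an eigenvector of the indicative-case transfer matrix `T` with
eigenvalue `(ωin - ωout)/(ωin + (q - 2)·ωout + γ⁻¹·ωout)`; in particular this
value is an eigenvalue of `T`. -/
theorem indT_eigenvector (q : ℕ) (hq : 3 ≤ q)
    (γ ωin ωout : ℝ) (hγ : 1 < γ) (hω : ωout < ωin) (hω0 : 0 < ωout)
    (r s : Fin q) (hr : 1 ≤ (r : ℕ)) (hs : 1 ≤ (s : ℕ)) (hrs : r ≠ s) :
    indT q γ ωin ωout *ᵥ (Pi.single r 1 - Pi.single s 1) =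
      ((ωin - ωout) / (ωin + ((q : ℝ) - 2) * ωout + γ⁻¹ * ωout)) •
        (Pi.single r 1 - Pi.single s 1) ∧
    Module.End.HasEigenvalue (Matrix.toLin' (indT q γ ωin ωout))
      ((ωin - ωout) / (ωin + ((q : ℝ) - 2) * ωout + γ⁻¹ * ωout)) := by
  haveI : NeZero q := ⟨by omega⟩
  have hγ0 : (0:ℝ) < γ := lt_trans zero_lt_one hγ
  have hq3 : (3:ℝ) ≤ (q:ℝ) := by exact_mod_cast hq
  have hin0 : (0:ℝ) < ωin := lt_trans hω0 hω
  have hr0 : (r:ℕ) ≠ 0 := by omega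
  have hs0 : (s:ℕ) ≠ 0 := by omega
  set Z : ℝ := γ + (q:ℝ) - 1 with hZdef
  have hZ : (0:ℝ) < Z := by rw [hZdef]; linarith
  set ψ : Fin q → ℝ := fun t => if (t:ℕ) = 0 then γ / Z else 1 / Z with hψ
  set F : Matrix (Fin q) (Fin q) ℝ :=
    Matrix.diagonal (fun t => if (t:ℕ) = 0 then (1:ℝ) else γ) with hF
  set Ω : Matrix (Fin q) (Fin q) ℝ := Matrix.of fun a b => if a = b then ωin else ωout with hΩ
  set M : Matrix (Fin q) (Fin q) ℝ := Matrix.diagonal ψ * Ω * F with hM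
  set D : Matrix (Fin q) (Fin q) ℝ := Matrix.diagonal (fun a => ∑ b, M a b) with hD
  have hindT : indT q γ ωin ωout = (1 - Matrix.vecMulVec ψ (fun _ => 1)) * (D⁻¹ * M) := rfl
  set v : Fin q → ℝ := Pi.single r 1 - Pi.single s 1 with hv
  set d : ℝ := ωout + γ * ωin + ((q:ℝ) - 2) * (γ * ωout) with hd
  have hdpos : 0 < d := by
    rw [hd]
    have h1 : (0:ℝ) < γ * ωout := mul_pos hγ0 hω0
    have h2 : (0:ℝ) ≤ ((q:ℝ) - 2) * (γ * ωout) :=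
      mul_nonneg (by linarith) h1.le
    nlinarith
  set μ : ℝ := (ωin - ωout) / (ωin + ((q:ℝ) - 2) * ωout + γ⁻¹ * ωout) with hμ
  have hMe : ∀ a b, M a b = ψ a * (if a = b then ωin else ωout) * (if (b:ℕ) = 0 then 1 else γ) := by
    intro a b
    rw [hM]
    rw [Matrix.mul_diagonal, Matrix.diagonal_mul]
    rfl
  have hψpos : ∀ a, 0 < ψ a := by
    intro a; rw [hψ]; dsimp only; split <;> positivity
  have hMpos : ∀ a b, 0 < M a b := by
    intro a b; rw [hMe]
    have h2 : (0:ℝ) < if a = b then ωin else ωout := by split <;> linarith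
    have h3 : (0:ℝ) < if (b:ℕ) = 0 then 1 else γ := by split <;> linarith
    exact mul_pos (mul_pos (hψpos a) h2) h3
  have hrowpos : ∀ a, 0 < ∑ b, M a b :=
    fun a => Finset.sum_pos (fun b _ => hMpos a b) Finset.univ_nonempty
  have hrow : ∀ a : Fin q, (a:ℕ) ≠ 0 → ∑ b, M a b = (1/Z) * d := by
    intro a ha
    have ha' : (0:Fin q) ≠ a := by
      intro h; exact ha (by rw [← h]; rfl)
    have key : ∀ b : Fin q, M a b =
        (1/Z) * (ωout * γ + ((if b = 0 then ωout - ωout * γ else 0)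
          + (if b = a then ωin * γ - ωout * γ else 0))) := by
      intro b
      rw [hMe]
      have hψa : ψ a = 1/Z := by rw [hψ]; simp [ha]
      by_cases hb0 : b = 0
      · subst hb0
        have hab : a ≠ (0:Fin q) := Ne.symm ha'
        simp [hψa, hab, ha', Fin.val_zero]
      · have hb0' : (b:ℕ) ≠ 0 := by
          intro h; exact hb0 (by ext; simpa using h)
        by_cases hba : b = a
        · subst hba; simp [hψa, hb0, hb0']; ring
        · simp [hψa, hb0, hb0', hba, Ne.symm hba]; ring
    rw [Finset.sum_congr rfl (fun b _ => key b), ← Finset.mul_sum]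
    rw [Finset.sum_add_distrib, Finset.sum_add_distrib, Finset.sum_const,
      Finset.sum_ite_eq', Finset.sum_ite_eq', Finset.card_univ, Fintype.card_fin]
    simp only [Finset.mem_univ, if_true, nsmul_eq_mul]
    rw [hd]; ring
  have hDinv : D⁻¹ = Matrix.diagonal (fun a => (∑ b, M a b)⁻¹) := by
    apply Matrix.inv_eq_right_inv
    rw [hD, Matrix.diagonal_mul_diagonal]
    rw [show (fun a => (∑ b, M a b) * (∑ b, M a b)⁻¹) = fun _ => (1:ℝ) from
      funext fun a => mul_inv_cancel₀ (hrowpos a).ne']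
    exact Matrix.diagonal_one
  have hMv : M *ᵥ v = (γ * (ωin - ωout) / Z) • v := by
    funext a
    simp only [hv, Matrix.mulVec, dotProduct, Pi.sub_apply, Pi.single_apply,
      Pi.smul_apply, smul_eq_mul, mul_sub, mul_ite, mul_one, mul_zero,
      Finset.sum_sub_distrib, Finset.sum_ite_eq', Finset.mem_univ, if_true]
    rw [hMe, hMe]
    simp only [hr0, hs0, if_false]
    by_cases har : a = r
    · subst har
      have has : a ≠ s := hrs
      have hψa : ψ a = 1/Z := by rw [hψ]; simp [hr0]
      simp [has, hψa]
      field_simp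
    · by_cases has : a = s
      · subst has
        have hψa : ψ a = 1/Z := by rw [hψ]; simp [hs0]
        simp [Ne.symm hrs, hψa]
        field_simp
        ring
      · simp [har, has]
  have hDMv : (D⁻¹ * M) *ᵥ v = ((γ * (ωin - ωout) / Z) * ((1/Z) * d)⁻¹) • v := by
    rw [← Matrix.mulVec_mulVec, hMv, Matrix.mulVec_smul, hDinv, hv,
      Matrix.mulVec_sub, Matrix.diagonal_mulVec_single, Matrix.diagonal_mulVec_single,
      hrow r hr0, hrow s hs0]
    funext a
    simp only [Pi.smul_apply, Pi.sub_apply, Pi.single_apply, smul_eq_mul, mul_one]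
    split_ifs <;> ring
  have hμeq : (γ * (ωin - ωout) / Z) * ((1/Z) * d)⁻¹ = μ := by
    have hden : (0:ℝ) < ωin + ((q:ℝ) - 2) * ωout + γ⁻¹ * ωout := by
      have : (0:ℝ) < γ⁻¹ := inv_pos.2 hγ0
      nlinarith
    have hZ0 : Z ≠ 0 := hZ.ne'
    have hd0 : d ≠ 0 := hdpos.ne'
    have hγne : γ ≠ 0 := hγ0.ne'
    have hden0 : (ωin + ((q:ℝ) - 2) * ωout + γ⁻¹ * ωout) ≠ 0 := hden.ne'
    have hd0' : (ωout + γ * ωin + ((q:ℝ) - 2) * (γ * ωout)) ≠ 0 := by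
      rw [← hd]; exact hdpos.ne'
    have hE0 : (0:ℝ) < ωout + γ * ωin + ((q:ℝ) - 2) * (γ * ωout) := by
      rw [← hd]; exact hdpos
    rw [hμ, hd, show ωin + ((q:ℝ) - 2) * ωout + γ⁻¹ * ωout
        = (ωout + γ * ωin + ((q:ℝ) - 2) * (γ * ωout)) / γ from by field_simp; ring]
    rw [div_div_eq_mul_div]
    field_simp
  have hTv : indT q γ ωin ωout *ᵥ v = μ • v := by
    rw [hindT, ← Matrix.mulVec_mulVec, hDMv, hμeq, Matrix.mulVec_smul,
      Matrix.sub_mulVec, Matrix.one_mulVec]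
    have hPv : Matrix.vecMulVec ψ (fun _ => (1:ℝ)) *ᵥ v = 0 := by
      funext a
      simp only [Matrix.mulVec, dotProduct, Matrix.vecMulVec_apply, hv, Pi.sub_apply,
        Pi.single_apply, mul_one, mul_sub, mul_ite, mul_zero, Finset.sum_sub_distrib,
        Finset.sum_ite_eq', Finset.mem_univ, if_true, Pi.zero_apply, sub_self]
    rw [hPv, sub_zero]
  refine ⟨hTv, ?_⟩
  have hvne : v ≠ 0 := by
    intro h
    have h2 := congrFun h r
    simp [hv, Pi.single_apply, hrs] at h2
  exact Module.End.hasEigenvalue_of_hasEigenvector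
    ⟨Module.End.mem_eigenspace_iff.2 (by rw [Matrix.toLin'_apply]; exact hTv), hvne⟩
end

section
/- Every eigenvalue of the indicative-case transfer matrix T, regarded as a matrix over the complex numbers, is a real number. -/
open Matrix BigOperators

/-- The vector ψ of the indicative-case transfer matrix. -/
noncomputable def indPsi (q : ℕ) (γ : ℝ) : Fin q → ℝ :=
  fun r => if (r : ℕ) = 0 then γ / (γ + (q : ℝ) - 1) else 1 / (γ + (q : ℝ) - 1)

/-- The matrix M of the indicative-case transfer matrix. -/
noncomputable def indM (q : ℕ) (γ ωin ωout : ℝ) : Matrix (Fin q) (Fin q) ℝ :=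
  Matrix.diagonal (indPsi q γ) *
    (Matrix.of fun r s : Fin q => if r = s then ωin else ωout) *
    Matrix.diagonal (fun r : Fin q => if (r : ℕ) = 0 then (1 : ℝ) else γ)

lemma fin_val_zero_iff {q : ℕ} [NeZero q] (a : Fin q) : (a : ℕ) = 0 ↔ a = 0 := by
  rw [Fin.ext_iff, Fin.val_zero]

lemma indT_eq (q : ℕ) (γ ωin ωout : ℝ) :
    indT q γ ωin ωout =
      (1 - Matrix.vecMulVec (indPsi q γ) (fun _ => 1)) *
        ((Matrix.diagonal (fun r => ∑ s, indM q γ ωin ωout r s))⁻¹ * indM q γ ωin ωout) := rfl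

lemma indM_apply (q : ℕ) (γ ωin ωout : ℝ) (a b : Fin q) :
    indM q γ ωin ωout a b =
      indPsi q γ a * (if a = b then ωin else ωout) * (if (b : ℕ) = 0 then (1 : ℝ) else γ) := by
  rw [indM, Matrix.mul_diagonal, Matrix.diagonal_mul, Matrix.of_apply]

/-- product of entrywise `σ`-equivariant matrices is `σ`-equivariant. -/
lemma mul_entry_equivar {q : ℕ} {R : Type*} [CommRing R] (σ : Equiv.Perm (Fin q))
    (A B : Matrix (Fin q) (Fin q) R)
    (hA : ∀ a b, A (σ a) (σ b) = A a b) (hB : ∀ a b, B (σ a) (σ b) = B a b)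
    (a b : Fin q) : (A * B) (σ a) (σ b) = (A * B) a b := by
  simp only [Matrix.mul_apply]
  rw [← Equiv.sum_comp σ (fun t => A (σ a) t * B t (σ b))]
  exact Finset.sum_congr rfl fun t _ => by rw [hA, hB]

/-- Every eigenvalue of the indicative-case transfer matrix `T`, regarded as a
matrix over `ℂ`, is a real number. -/
theorem indT_eigenvalues_real (q : ℕ) (hq : 2 ≤ q)
    (γ ωin ωout : ℝ) (hγ : 1 < γ) (hω : ωout < ωin) (hω0 : 0 < ωout) :
    ∀ μ ∈ spectrum ℂ ((indT q γ ωin ωout).map Complex.ofReal), μ.im = 0 := by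
  intro μ hμ
  haveI : NeZero q := ⟨by omega⟩
  have hq2 : (2 : ℝ) ≤ (q : ℝ) := by exact_mod_cast hq
  have hZ : (0 : ℝ) < γ + (q : ℝ) - 1 := by linarith
  set ψ : Fin q → ℝ := indPsi q γ with hψdef
  set M : Matrix (Fin q) (Fin q) ℝ := indM q γ ωin ωout with hMdef
  set T : Matrix (Fin q) (Fin q) ℝ := indT q γ ωin ωout with hTdef
  -- basic positivity
  have hψpos : ∀ r, 0 < ψ r := by
    intro r
    rw [hψdef, indPsi]
    split_ifs <;> positivity
  have hψsum : ∑ r, ψ r = 1 := by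
    rw [← Finset.add_sum_erase _ _ (Finset.mem_univ (0 : Fin q))]
    rw [Finset.sum_congr rfl (fun r hr => show ψ r = 1 / (γ + (q : ℝ) - 1) by
      rw [hψdef, indPsi, if_neg]
      rw [fin_val_zero_iff]
      exact Finset.ne_of_mem_erase hr)]
    rw [Finset.sum_const, Finset.card_erase_of_mem (Finset.mem_univ _), Finset.card_univ,
      Fintype.card_fin, nsmul_eq_mul]
    have hcast : ((q - 1 : ℕ) : ℝ) = (q : ℝ) - 1 := by
      have h1 : 1 ≤ q := by omega
      push_cast [h1]
      ring
    rw [hcast]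
    have hψ0 : ψ 0 = γ / (γ + (q : ℝ) - 1) := by
      rw [hψdef]
      simp [indPsi]
    rw [hψ0]
    field_simp
    ring
  have hMpos : ∀ a b, 0 < M a b := by
    intro a b
    rw [hMdef, indM_apply]
    have h1 : 0 < indPsi q γ a := hψpos a
    have h2 : (0:ℝ) < if a = b then ωin else ωout := by split_ifs <;> linarith
    have h3 : (0:ℝ) < if (b : ℕ) = 0 then (1:ℝ) else γ := by split_ifs <;> linarith
    positivity
  have hd : ∀ t, (0 : ℝ) < ∑ s, M t s :=
    fun t => Finset.sum_pos (fun s _ => hMpos t s) Finset.univ_nonempty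
  have hDinv : (Matrix.diagonal (fun r => ∑ s, M r s))⁻¹ =
      Matrix.diagonal (fun r => (∑ s, M r s)⁻¹) := by
    apply Matrix.inv_eq_right_inv
    rw [Matrix.diagonal_mul_diagonal]
    rw [show (fun r => (∑ s, M r s) * (∑ s, M r s)⁻¹) = fun _ => (1:ℝ) from
      funext fun r => mul_inv_cancel₀ (hd r).ne']
    exact Matrix.diagonal_one
  -- column sums of T vanish
  have hcol : ∀ s, ∑ r, T r s = 0 := by
    intro s
    rw [hTdef, indT_eq]
    simp only [Matrix.mul_apply]
    rw [Finset.sum_comm]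
    refine Finset.sum_eq_zero fun t _ => ?_
    rw [← Finset.sum_mul]
    have h0 : ∑ r, (1 - Matrix.vecMulVec (indPsi q γ) fun _ => (1:ℝ)) r t = 0 := by
      simp only [Matrix.sub_apply, Matrix.vecMulVec_apply, mul_one]
      rw [Finset.sum_sub_distrib]
      rw [show ∑ r, indPsi q γ r = 1 from hψsum]
      simp [Matrix.one_apply]
    rw [h0, zero_mul]
  -- swap equivariance of T
  have hswap : ∀ r r' : Fin q, r ≠ 0 → r' ≠ 0 → ∀ a b,
      T (Equiv.swap r r' a) (Equiv.swap r r' b) = T a b := by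
    intro r r' hr hr'
    set σ := Equiv.swap r r' with hσ
    have hσ0 : σ 0 = 0 := Equiv.swap_apply_of_ne_of_ne (Ne.symm hr) (Ne.symm hr')
    have hzero : ∀ a : Fin q, ((σ a : Fin q) : ℕ) = 0 ↔ (a : ℕ) = 0 := by
      intro a
      rw [fin_val_zero_iff, fin_val_zero_iff]
      constructor
      · intro h; exact σ.injective (h.trans hσ0.symm)
      · rintro rfl; exact hσ0
    have hψσ : ∀ a, indPsi q γ (σ a) = indPsi q γ a := by
      intro a
      unfold indPsi
      by_cases h : (a : ℕ) = 0
      · rw [if_pos h, if_pos ((hzero a).mpr h)]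
      · rw [if_neg h, if_neg (fun hh => h ((hzero a).mp hh))]
    have hfσ : ∀ b : Fin q, (if ((σ b : Fin q) : ℕ) = 0 then (1:ℝ) else γ)
        = (if (b : ℕ) = 0 then (1:ℝ) else γ) := by
      intro b
      by_cases h : (b : ℕ) = 0
      · rw [if_pos h, if_pos ((hzero b).mpr h)]
      · rw [if_neg h, if_neg (fun hh => h ((hzero b).mp hh))]
    have hMσ : ∀ a b, indM q γ ωin ωout (σ a) (σ b) = indM q γ ωin ωout a b := by
      intro a b
      rw [indM_apply, indM_apply, hψσ, hfσ]
      congr 2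
      simp [σ.injective.eq_iff]
    have hdσ : ∀ a, (∑ s, indM q γ ωin ωout (σ a) s) = ∑ s, indM q γ ωin ωout a s := by
      intro a
      rw [← Equiv.sum_comp σ (fun s => indM q γ ωin ωout (σ a) s)]
      exact Finset.sum_congr rfl fun s _ => hMσ a s
    have hRσ : ∀ a b, ((Matrix.diagonal (fun t => ∑ s, indM q γ ωin ωout t s))⁻¹ *
        indM q γ ωin ωout) (σ a) (σ b)
        = ((Matrix.diagonal (fun t => ∑ s, indM q γ ωin ωout t s))⁻¹ *
          indM q γ ωin ωout) a b := by
      intro a b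
      rw [show (Matrix.diagonal (fun t => ∑ s, indM q γ ωin ωout t s))⁻¹ =
          Matrix.diagonal (fun t => (∑ s, indM q γ ωin ωout t s)⁻¹) from hDinv]
      rw [Matrix.diagonal_mul, Matrix.diagonal_mul, hMσ, hdσ]
    have hQσ : ∀ a b, (1 - Matrix.vecMulVec (indPsi q γ) fun _ => (1:ℝ)) (σ a) (σ b)
        = (1 - Matrix.vecMulVec (indPsi q γ) fun _ => (1:ℝ)) a b := by
      intro a b
      simp only [Matrix.sub_apply, Matrix.vecMulVec_apply, mul_one, Matrix.one_apply,
        σ.injective.eq_iff, hψσ]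
    intro a b
    rw [hTdef, indT_eq]
    exact mul_entry_equivar σ _ _ hQσ hRσ a b
  -- extract an eigenvector
  set A : Matrix (Fin q) (Fin q) ℂ := T.map Complex.ofReal with hAdef
  rw [spectrum.mem_iff] at hμ
  have hdet : (algebraMap ℂ (Matrix (Fin q) (Fin q) ℂ) μ - A).det = 0 := by
    by_contra h
    exact hμ ((Matrix.isUnit_iff_isUnit_det _).mpr (Ne.isUnit h))
  obtain ⟨v, hv0, hveq⟩ := Matrix.exists_mulVec_eq_zero_iff.mpr hdet
  have hAv : ∀ r, μ * v r = ∑ s, A r s * v s := by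
    intro r
    have h1 : (algebraMap ℂ (Matrix (Fin q) (Fin q) ℂ) μ).mulVec v - A.mulVec v = 0 := by
      rw [← Matrix.sub_mulVec]; exact hveq
    have h2 : (algebraMap ℂ (Matrix (Fin q) (Fin q) ℂ) μ).mulVec v = μ • v := by
      rw [Algebra.algebraMap_eq_smul_one, Matrix.smul_mulVec, Matrix.one_mulVec]
    rw [h2, sub_eq_zero] at h1
    have := congrFun h1 r
    simp only [Pi.smul_apply, smul_eq_mul] at this
    rw [this]
    rfl
  have hAentry : ∀ a b, A a b = Complex.ofReal (T a b) := fun a b => rfl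
  -- main case analysis
  by_cases hall : ∀ r r' : Fin q, r ≠ 0 → r' ≠ 0 → v r = v r'
  · -- all nonzero coordinates of v agree
    have hsum0 : μ * ∑ r, v r = 0 := by
      rw [Finset.mul_sum]
      rw [Finset.sum_congr rfl fun r _ => hAv r]
      rw [Finset.sum_comm]
      refine Finset.sum_eq_zero fun s _ => ?_
      rw [← Finset.sum_mul]
      have : ∑ r, A r s = 0 := by
        rw [Finset.sum_congr rfl fun r _ => hAentry r s, ← Complex.ofReal_sum, hcol s,
          Complex.ofReal_zero]
      rw [this, zero_mul]
    by_cases hμ0 : μ = 0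
    · rw [hμ0]; rfl
    · have hsv : ∑ r, v r = 0 := by
        rcases mul_eq_zero.mp hsum0 with h | h
        · exact absurd h hμ0
        · exact h
      set r1 : Fin q := ⟨1, by omega⟩ with hr1def
      have hr1 : r1 ≠ 0 := by
        simp [hr1def, Fin.ext_iff]
      set w : ℂ := v r1 with hwdef
      have hvr : ∀ r : Fin q, r ≠ 0 → v r = w := fun r hr => hall r r1 hr hr1
      have hcard : (Finset.univ.erase (0 : Fin q)).card = q - 1 := by
        rw [Finset.card_erase_of_mem (Finset.mem_univ _), Finset.card_univ, Fintype.card_fin]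
      have hv0val : v 0 = -(((q - 1 : ℕ) : ℂ) * w) := by
        have h1 : v 0 + ∑ r ∈ Finset.univ.erase (0 : Fin q), v r = ∑ r, v r :=
          Finset.add_sum_erase _ _ (Finset.mem_univ 0)
        rw [Finset.sum_congr rfl (fun r hr => hvr r (Finset.ne_of_mem_erase hr)),
          Finset.sum_const, hcard, nsmul_eq_mul, hsv] at h1
        linear_combination h1
      have hwne : w ≠ 0 := by
        intro hw
        apply hv0
        funext r
        by_cases hr : r = 0
        · rw [hr, hv0val, hw]; simp
        · rw [hvr r hr, hw]; rfl
      -- row r1 of the eigenvalue equation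
      have hrow := hAv r1
      rw [← Finset.add_sum_erase _ _ (Finset.mem_univ (0 : Fin q))] at hrow
      rw [Finset.sum_congr rfl (fun s hs => by rw [hvr s (Finset.ne_of_mem_erase hs)]),
        ← Finset.sum_mul, hv0val] at hrow
      set c : ℂ := (∑ s ∈ Finset.univ.erase (0 : Fin q), A r1 s) - ((q - 1 : ℕ) : ℂ) * A r1 0
        with hcdef
      have hμc : μ = c := by
        have h3 : μ * w = c * w := by rw [hrow, hcdef]; ring
        exact mul_right_cancel₀ hwne h3
      rw [hμc, hcdef]
      rw [Finset.sum_congr rfl fun s _ => hAentry r1 s, ← Complex.ofReal_sum, hAentry r1 0]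
      simp [Complex.sub_im, Complex.mul_im]
  · -- two nonzero coordinates of v differ
    push_neg at hall
    obtain ⟨r, r', hr, hr', hne⟩ := hall
    set σ := Equiv.swap r r' with hσ
    have hrr' : r ≠ r' := fun h => hne (by rw [h])
    have key : ∑ s, A r' s * v s = ∑ s, A r s * v (σ s) := by
      rw [← Equiv.sum_comp σ (fun s => A r' s * v s)]
      refine Finset.sum_congr rfl fun s _ => ?_
      have h1 : A (σ r) (σ s) = A r s := by
        rw [hAentry, hAentry]
        exact congrArg _ (hswap r r' hr hr' r s)
      rw [show σ r = r' from Equiv.swap_apply_left r r'] at h1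
      rw [h1]
    have hdiff : μ * (v r - v r') = (A r r - A r r') * (v r - v r') := by
      have e1 : μ * v r - μ * v r' = ∑ s, (A r s * v s - A r s * v (σ s)) := by
        rw [Finset.sum_sub_distrib, hAv r, hAv r', key]
      have e2 : ∑ s, (A r s * v s - A r s * v (σ s)) =
          (A r r - A r r') * (v r - v r') := by
        rw [show (Finset.univ : Finset (Fin q)) =
          insert r (insert r' ((Finset.univ.erase r).erase r')) from ?_]
        · rw [Finset.sum_insert, Finset.sum_insert]
          · have hrest : ∑ s ∈ (Finset.univ.erase r).erase r',
                (A r s * v s - A r s * v (σ s)) = 0 := by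
              refine Finset.sum_eq_zero fun s hs => ?_
              have hs1 : s ≠ r' := Finset.ne_of_mem_erase hs
              have hs2 : s ≠ r := Finset.ne_of_mem_erase (Finset.mem_of_mem_erase hs)
              rw [show σ s = s from Equiv.swap_apply_of_ne_of_ne hs2 hs1]
              ring
            rw [hrest, show σ r = r' from Equiv.swap_apply_left r r',
              show σ r' = r from Equiv.swap_apply_right r r']
            ring
          · intro h
            exact (Finset.ne_of_mem_erase h) rfl
          · intro h
            rcases Finset.mem_insert.mp h with h | h
            · exact hrr' h
            · exact (Finset.ne_of_mem_erase (Finset.mem_of_mem_erase h)) rfl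
        · ext s
          simp only [Finset.mem_univ, Finset.mem_insert, Finset.mem_erase, true_iff, true_and]
          by_cases h1 : s = r
          · tauto
          · by_cases h2 : s = r'
            · tauto
            · tauto
      rw [mul_sub, e1, e2]
    have hμeq : μ = A r r - A r r' := mul_right_cancel₀ (sub_ne_zero.mpr hne) hdiff
    rw [hμeq, hAentry, hAentry]
    simp [Complex.sub_im]
end
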